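/- arXiv:2303.06198 — 2 statements merged into one kernel-verified Lean document; each statement's English description precedes it below -/
import Mathlib

section
/- Let U, U* ∈ ℝ^{n×r} have orthonormal columns, and let R_U := sgn(Uᵀ U*) be the matrix sign (polar factor) of Uᵀ U*, assumed invertible. Then ‖R_U − Uᵀ U*‖ ≤ ‖U Uᵀ − U* U*ᵀ‖². -/
open Matrix

noncomputable def spec {m n : ℕ} (A : Matrix (Fin m) (Fin n) ℝ) : ℝ :=
  ‖(Matrix.toEuclideanLin A).toContinuousLinearMap‖

noncomputable def rowNorm {m n : ℕ} (A : Matrix (Fin m) (Fin n) ℝ) : ℝ :=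
  ⨆ i, Real.sqrt (∑ j, A i j ^ 2)

lemma dot_nonneg' {m : ℕ} (v : Fin m → ℝ) : 0 ≤ v ⬝ᵥ v :=
  Finset.sum_nonneg fun i _ => mul_self_nonneg _

lemma dot_mul' {m n : ℕ} (M : Matrix (Fin m) (Fin n) ℝ) (x : Fin m → ℝ) (y : Fin n → ℝ) :
    x ⬝ᵥ (M *ᵥ y) = (Mᵀ *ᵥ x) ⬝ᵥ y := by
  rw [Matrix.dotProduct_mulVec, Matrix.mulVec_transpose]

lemma iso' {m n : ℕ} {M : Matrix (Fin m) (Fin n) ℝ} (hM : Mᵀ * M = 1) (y : Fin n → ℝ) :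
    (M *ᵥ y) ⬝ᵥ (M *ᵥ y) = y ⬝ᵥ y := by
  rw [dot_mul', Matrix.mulVec_mulVec, hM, Matrix.one_mulVec]

lemma cs' {m : ℕ} (x y : Fin m → ℝ) : (x ⬝ᵥ y) ^ 2 ≤ (x ⬝ᵥ x) * (y ⬝ᵥ y) := by
  have := Finset.sum_mul_sq_le_sq_mul_sq Finset.univ x y
  simpa [dotProduct, sq] using this

lemma norm_sq_eq' {m : ℕ} (v : Fin m → ℝ) :
    ‖(WithLp.equiv 2 (Fin m → ℝ)).symm v‖ ^ 2 = v ⬝ᵥ v := by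
  rw [EuclideanSpace.norm_eq, Real.sq_sqrt (Finset.sum_nonneg fun i _ => sq_nonneg _)]
  simp [dotProduct, sq]

lemma spec_le' {m n : ℕ} {M : Matrix (Fin m) (Fin n) ℝ} {c : ℝ} (hc : 0 ≤ c)
    (h : ∀ v : Fin n → ℝ, (M *ᵥ v) ⬝ᵥ (M *ᵥ v) ≤ c ^ 2 * (v ⬝ᵥ v)) : spec M ≤ c := by
  apply ContinuousLinearMap.opNorm_le_bound _ hc
  intro x
  have hx : x = (WithLp.equiv 2 (Fin n → ℝ)).symm ((WithLp.equiv 2 (Fin n → ℝ)) x) := rfl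
  have h1 : ‖(Matrix.toEuclideanLin M).toContinuousLinearMap x‖ ^ 2
      = (M *ᵥ (WithLp.equiv 2 (Fin n → ℝ)) x) ⬝ᵥ (M *ᵥ (WithLp.equiv 2 (Fin n → ℝ)) x) := by
    rw [show (Matrix.toEuclideanLin M).toContinuousLinearMap x
        = (WithLp.equiv 2 (Fin m → ℝ)).symm (M *ᵥ (WithLp.equiv 2 (Fin n → ℝ)) x) from rfl]
    exact norm_sq_eq' _
  have h2 : ‖x‖ ^ 2 = ((WithLp.equiv 2 (Fin n → ℝ)) x) ⬝ᵥ ((WithLp.equiv 2 (Fin n → ℝ)) x) := by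
    rw [hx]; exact norm_sq_eq' _
  have := h ((WithLp.equiv 2 (Fin n → ℝ)) x)
  rw [← h1, ← h2] at this
  nlinarith [norm_nonneg ((Matrix.toEuclideanLin M).toContinuousLinearMap x), norm_nonneg x,
    mul_nonneg hc (norm_nonneg x)]

lemma le_spec' {m n : ℕ} (M : Matrix (Fin m) (Fin n) ℝ) (v : Fin n → ℝ) :
    (M *ᵥ v) ⬝ᵥ (M *ᵥ v) ≤ spec M ^ 2 * (v ⬝ᵥ v) := by
  have h := (Matrix.toEuclideanLin M).toContinuousLinearMap.le_opNorm
    ((WithLp.equiv 2 (Fin n → ℝ)).symm v)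
  have h1 : (Matrix.toEuclideanLin M).toContinuousLinearMap ((WithLp.equiv 2 (Fin n → ℝ)).symm v)
      = (WithLp.equiv 2 (Fin m → ℝ)).symm (M *ᵥ v) := rfl
  rw [h1] at h
  have h2 := norm_sq_eq' (m := m) (M *ᵥ v)
  have h3 := norm_sq_eq' (m := n) v
  have hnn := norm_nonneg ((WithLp.equiv 2 (Fin m → ℝ)).symm (M *ᵥ v))
  have hnn2 := norm_nonneg ((WithLp.equiv 2 (Fin n → ℝ)).symm v)
  unfold spec
  have hs : (0:ℝ) ≤ ‖(Matrix.toEuclideanLin M).toContinuousLinearMap‖ := norm_nonneg _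
  nlinarith [h, h2, h3]

lemma contract' {nn r : ℕ} {U : Matrix (Fin nn) (Fin r) ℝ} (hU : Uᵀ * U = 1)
    (z : Fin nn → ℝ) : (Uᵀ *ᵥ z) ⬝ᵥ (Uᵀ *ᵥ z) ≤ z ⬝ᵥ z := by
  set s := (Uᵀ *ᵥ z) ⬝ᵥ (Uᵀ *ᵥ z) with hs
  have h1 : s = z ⬝ᵥ (U *ᵥ (Uᵀ *ᵥ z)) := by rw [dot_mul']
  have h2 : (U *ᵥ (Uᵀ *ᵥ z)) ⬝ᵥ (U *ᵥ (Uᵀ *ᵥ z)) = s := iso' hU _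
  have h3 := cs' z (U *ᵥ (Uᵀ *ᵥ z))
  rw [h2, ← h1] at h3
  have h4 : 0 ≤ s := dot_nonneg' _
  have h5 : 0 ≤ z ⬝ᵥ z := dot_nonneg' _
  nlinarith

lemma single_dot {r : ℕ} (k : Fin r) (a b : ℝ) :
    (Pi.single k a : Fin r → ℝ) ⬝ᵥ (Pi.single k b) = a * b := by
  simp [dotProduct, Pi.single_apply]

lemma diag_single {r : ℕ} (sv : Fin r → ℝ) (k : Fin r) :
    (Matrix.diagonal sv) *ᵥ (Pi.single k 1 : Fin r → ℝ) = Pi.single k (sv k) := by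
  ext i
  rw [Matrix.mulVec_diagonal]
  by_cases h : i = k
  · subst h; simp
  · simp [Pi.single_apply, h]

lemma proj_fix {nn r : ℕ} {M : Matrix (Fin nn) (Fin r) ℝ} (hM : Mᵀ * M = 1)
    (x : Fin r → ℝ) : (M * Mᵀ) *ᵥ (M *ᵥ x) = M *ᵥ x := by
  rw [Matrix.mulVec_mulVec, Matrix.mul_assoc, hM, Matrix.mul_one]

/-- ‖sgn(UᵀU*) − UᵀU*‖ ≤ ‖UUᵀ − U*U*ᵀ‖², where sgn is the polar factor given by an
SVD UᵀU* = A S Bᵀ with A, B orthogonal and S diagonal nonnegative. -/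
theorem stmt9 {n r : ℕ}
    (U Ustar : Matrix (Fin n) (Fin r) ℝ)
    (hU : Uᵀ * U = 1) (hUstar : Ustarᵀ * Ustar = 1)
    (A B : Matrix (Fin r) (Fin r) ℝ) (sv : Fin r → ℝ)
    (hA : Aᵀ * A = 1) (hB : Bᵀ * B = 1)
    (hsv : ∀ i, 0 ≤ sv i)
    (hinv : IsUnit (Uᵀ * Ustar))
    (hSVD : Uᵀ * Ustar = A * Matrix.diagonal sv * Bᵀ) :
    spec (A * Bᵀ - Uᵀ * Ustar) ≤ (spec (U * Uᵀ - Ustar * Ustarᵀ)) ^ 2 := by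
  rcases Nat.eq_zero_or_pos r with hr | hr
  · subst hr
    have h0 : spec (A * Bᵀ - Uᵀ * Ustar) ≤ 0 := by
      apply spec_le' le_rfl
      intro v
      simp [dotProduct]
    exact h0.trans (sq_nonneg _)
  -- pick the minimal singular value
  obtain ⟨k, -, hk⟩ := Finset.exists_min_image Finset.univ sv ⟨⟨0, hr⟩, Finset.mem_univ _⟩
  have hkmin : ∀ i, sv k ≤ sv i := fun i => hk i (Finset.mem_univ i)
  have hB2 : B * Bᵀ = 1 := mul_eq_one_comm.mp hB
  have hHB : (Uᵀ * Ustar) * B = A * Matrix.diagonal sv := by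
    rw [hSVD, Matrix.mul_assoc, Matrix.mul_assoc, hB, Matrix.mul_one]
  -- all singular values are ≤ 1
  have hsv1 : ∀ i, sv i ≤ 1 := by
    intro i
    have h1 : Uᵀ *ᵥ (Ustar *ᵥ (B *ᵥ (Pi.single i 1 : Fin r → ℝ)))
        = A *ᵥ (Pi.single i (sv i)) := by
      rw [Matrix.mulVec_mulVec, Matrix.mulVec_mulVec, hHB,
        ← Matrix.mulVec_mulVec, diag_single]
    have h2 := contract' hU (Ustar *ᵥ (B *ᵥ (Pi.single i 1 : Fin r → ℝ)))
    rw [h1, iso' hA, iso' hUstar, iso' hB, single_dot, single_dot] at h2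
    nlinarith [hsv i]
  have hk1 : sv k ≤ 1 := hsv1 k
  have hk0 : 0 ≤ sv k := hsv k
  -- Step A : spec (A*Bᵀ - UᵀUstar) ≤ 1 - sv k
  have stepA : spec (A * Bᵀ - Uᵀ * Ustar) ≤ 1 - sv k := by
    apply spec_le' (by linarith)
    intro v
    have hM : A * Bᵀ - Uᵀ * Ustar = A * ((1 - Matrix.diagonal sv) * Bᵀ) := by
      rw [hSVD]; noncomm_ring
    rw [hM, ← Matrix.mulVec_mulVec, ← Matrix.mulVec_mulVec, iso' hA]
    set z := Bᵀ *ᵥ v with hz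
    have hdz : ((1 - Matrix.diagonal sv) *ᵥ z) = fun i => (1 - sv i) * z i := by
      ext i
      have : (1 : Matrix (Fin r) (Fin r) ℝ) - Matrix.diagonal sv
          = Matrix.diagonal (fun i => 1 - sv i) := by
        rw [← Matrix.diagonal_one, Matrix.diagonal_sub]
      rw [this, Matrix.mulVec_diagonal]
    rw [hdz]
    have hzz : z ⬝ᵥ z = v ⬝ᵥ v := by
      rw [hz]
      have : (Bᵀ)ᵀ * Bᵀ = 1 := by rw [Matrix.transpose_transpose, hB2]
      exact iso' this v
    have hsum : (fun i => (1 - sv i) * z i) ⬝ᵥ (fun i => (1 - sv i) * z i)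
        ≤ (1 - sv k) ^ 2 * (z ⬝ᵥ z) := by
      unfold dotProduct
      rw [Finset.mul_sum]
      apply Finset.sum_le_sum
      intro i _
      have h1 : (1 - sv i) ^ 2 ≤ (1 - sv k) ^ 2 := by nlinarith [hkmin i, hsv1 i, hsv i]
      have h2 := mul_le_mul_of_nonneg_right h1 (mul_self_nonneg (z i))
      beta_reduce
      nlinarith [h2]
    rw [hzz] at hsum
    exact hsum
  -- Step B : 1 - sv k ^ 2 ≤ spec D ^ 2
  set D := U * Uᵀ - Ustar * Ustarᵀ with hD
  set w : Fin n → ℝ := Ustar *ᵥ (B *ᵥ (Pi.single k 1 : Fin r → ℝ)) with hw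
  have hww : w ⬝ᵥ w = 1 := by
    rw [hw, iso' hUstar, iso' hB, single_dot, mul_one]
  set p : Fin r → ℝ := A *ᵥ (Pi.single k (sv k)) with hp
  have hUtw : Uᵀ *ᵥ w = p := by
    rw [hw, hp, Matrix.mulVec_mulVec, Matrix.mulVec_mulVec, hHB,
      ← Matrix.mulVec_mulVec, diag_single]
  have hDw : D *ᵥ w = U *ᵥ p - w := by
    rw [hD, Matrix.sub_mulVec]
    congr 1
    · rw [← Matrix.mulVec_mulVec, hUtw]
    · rw [hw]
      exact proj_fix hUstar _
  have hpp : p ⬝ᵥ p = sv k * sv k := by rw [hp, iso' hA, single_dot]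
  have hUpw : (U *ᵥ p) ⬝ᵥ w = sv k * sv k := by
    rw [dotProduct_comm, dot_mul', hUtw, hpp]
  have hDwDw : (D *ᵥ w) ⬝ᵥ (D *ᵥ w) = 1 - sv k ^ 2 := by
    rw [hDw, sub_dotProduct, dotProduct_sub, dotProduct_sub,
      iso' hU, hpp, hUpw, dotProduct_comm w (U *ᵥ p), hUpw, hww]
    ring
  have stepB : 1 - sv k ^ 2 ≤ spec D ^ 2 := by
    have := le_spec' D w
    rw [hDwDw, hww, mul_one] at this
    exact this
  have : 1 - sv k ≤ 1 - sv k ^ 2 := by nlinarith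
  linarith
end

section
/- Let Ũ Σ̃ W̃ᵀ = U*Σ* + E V* as above with σ̃_r := smallest diagonal entry of Σ̃ > 0. Then ‖U*U*ᵀŨ − Ũ‖_{2,∞} ≤ (‖E V*‖_{2,∞} + ‖U*‖_{2,∞}·‖U*ᵀ E V*‖) / σ̃_r. -/
open Matrix

section Aux

open scoped Matrix.Norms.L2Operator

lemma spec_eq_norm {m n : ℕ} (A : Matrix (Fin m) (Fin n) ℝ) : spec A = ‖A‖ := rfl

lemma spec_nonneg {m n : ℕ} (A : Matrix (Fin m) (Fin n) ℝ) : 0 ≤ spec A :=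
  norm_nonneg _

lemma spec_transpose {m n : ℕ} (A : Matrix (Fin m) (Fin n) ℝ) : spec Aᵀ = spec A := by
  have h : Aᴴ = Aᵀ := by ext i j; simp [conjTranspose_apply]
  have := Matrix.l2_opNorm_conjTranspose A
  rw [h] at this
  exact this

lemma eucl_norm_eq {n : ℕ} (v : Fin n → ℝ) :
    ‖((WithLp.equiv 2 (Fin n → ℝ)).symm v : EuclideanSpace ℝ (Fin n))‖
      = Real.sqrt (∑ j, v j ^ 2) := by
  rw [EuclideanSpace.norm_eq]
  congr 1
  exact Finset.sum_congr rfl fun j _ => by simp [sq_abs]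

lemma rowNorm_nonneg {m n : ℕ} (A : Matrix (Fin m) (Fin n) ℝ) : 0 ≤ rowNorm A :=
  Real.iSup_nonneg fun _ => Real.sqrt_nonneg _

lemma sqrt_le_rowNorm {m n : ℕ} (A : Matrix (Fin m) (Fin n) ℝ) (i : Fin m) :
    Real.sqrt (∑ j, A i j ^ 2) ≤ rowNorm A := by
  rw [rowNorm]
  exact le_ciSup (f := fun i => Real.sqrt (∑ j, A i j ^ 2))
    (Set.Finite.bddAbove (Set.finite_range _)) i

lemma rowNorm_sub_le {m n : ℕ} (A B : Matrix (Fin m) (Fin n) ℝ) :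
    rowNorm (A - B) ≤ rowNorm A + rowNorm B := by
  apply Real.iSup_le _ (add_nonneg (rowNorm_nonneg A) (rowNorm_nonneg B))
  intro i
  have h : Real.sqrt (∑ j, (A - B) i j ^ 2)
      ≤ Real.sqrt (∑ j, A i j ^ 2) + Real.sqrt (∑ j, B i j ^ 2) := by
    rw [← eucl_norm_eq, ← eucl_norm_eq, ← eucl_norm_eq]
    have : ((WithLp.equiv 2 (Fin n → ℝ)).symm ((A - B) i) : EuclideanSpace ℝ (Fin n))
        = (WithLp.equiv 2 (Fin n → ℝ)).symm (A i) - (WithLp.equiv 2 (Fin n → ℝ)).symm (B i) := by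
      rfl
    rw [this]
    exact norm_sub_le _ _
  exact h.trans (add_le_add (sqrt_le_rowNorm A i) (sqrt_le_rowNorm B i))

lemma rowNorm_mul_le {m n k : ℕ} (A : Matrix (Fin m) (Fin n) ℝ)
    (B : Matrix (Fin n) (Fin k) ℝ) :
    rowNorm (A * B) ≤ rowNorm A * spec B := by
  apply Real.iSup_le _ (mul_nonneg (rowNorm_nonneg A) (spec_nonneg B))
  intro i
  have hrow : (A * B) i = Bᵀ *ᵥ (A i) := by
    ext j
    simp [mul_apply, mulVec, dotProduct, mul_comm]
  have h1 : Real.sqrt (∑ j, (A * B) i j ^ 2)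
      = ‖((WithLp.equiv 2 (Fin k → ℝ)).symm (Bᵀ *ᵥ (A i)) : EuclideanSpace ℝ (Fin k))‖ := by
    rw [eucl_norm_eq, hrow]
  have h2 := Matrix.l2_opNorm_mulVec Bᵀ
    ((WithLp.equiv 2 (Fin n → ℝ)).symm (A i) : EuclideanSpace ℝ (Fin n))
  rw [h1]
  have h3 : ‖((WithLp.equiv 2 (Fin k → ℝ)).symm (Bᵀ *ᵥ (A i)) : EuclideanSpace ℝ (Fin k))‖
      ≤ ‖Bᵀ‖ * ‖((WithLp.equiv 2 (Fin n → ℝ)).symm (A i) : EuclideanSpace ℝ (Fin n))‖ := h2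
  refine h3.trans ?_
  rw [← spec_eq_norm, spec_transpose, eucl_norm_eq]
  rw [mul_comm]
  exact mul_le_mul_of_nonneg_right (sqrt_le_rowNorm A i) (spec_nonneg B)

lemma rowNorm_mul_orth_diag {m r : ℕ} (Y : Matrix (Fin m) (Fin r) ℝ)
    (W : Matrix (Fin r) (Fin r) ℝ) (hW : W * Wᵀ = 1) (d : Fin r → ℝ) (c : ℝ)
    (hc : 0 ≤ c) (hd : ∀ j, |d j| ≤ c) :
    rowNorm (Y * W * Matrix.diagonal d) ≤ c * rowNorm Y := by
  apply Real.iSup_le _ (mul_nonneg hc (rowNorm_nonneg Y))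
  intro i
  have hsum : ∑ j, (Y * W) i j ^ 2 = ∑ j, Y i j ^ 2 := by
    have e1 : ∀ (X : Matrix (Fin m) (Fin r) ℝ), ∑ j, X i j ^ 2 = (X * Xᵀ) i i := by
      intro X; simp [mul_apply, sq]
    rw [e1, e1]
    have : Y * W * (Y * W)ᵀ = Y * Yᵀ := by
      rw [Matrix.transpose_mul, Matrix.mul_assoc, ← Matrix.mul_assoc W, hW,
        Matrix.one_mul]
    rw [this]
  have hb : ∑ j, (Y * W * Matrix.diagonal d) i j ^ 2 ≤ c ^ 2 * ∑ j, Y i j ^ 2 := by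
    rw [← hsum, Finset.mul_sum]
    apply Finset.sum_le_sum
    intro j _
    rw [Matrix.mul_diagonal]
    have : ((Y * W) i j * d j) ^ 2 = d j ^ 2 * (Y * W) i j ^ 2 := by ring
    rw [this]
    apply mul_le_mul_of_nonneg_right _ (sq_nonneg _)
    calc d j ^ 2 = |d j| ^ 2 := (sq_abs _).symm
      _ ≤ c ^ 2 := by apply pow_le_pow_left₀ (abs_nonneg _) (hd j)
  calc Real.sqrt (∑ j, (Y * W * Matrix.diagonal d) i j ^ 2)
      ≤ Real.sqrt (c ^ 2 * ∑ j, Y i j ^ 2) := Real.sqrt_le_sqrt hb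
    _ = c * Real.sqrt (∑ j, Y i j ^ 2) := by
        rw [Real.sqrt_mul (sq_nonneg c), Real.sqrt_sq hc]
    _ ≤ c * rowNorm Y := mul_le_mul_of_nonneg_left (sqrt_le_rowNorm Y i) hc

end Aux

/-- ‖U*U*ᵀŨ − Ũ‖_{2,∞} ≤ (‖EV*‖_{2,∞} + ‖U*‖_{2,∞}·‖U*ᵀEV*‖)/σ̃_r, where σ̃_r is the
smallest diagonal entry of Σ̃ in the compact SVD Ũ Σ̃ W̃ᵀ of U*Σ* + EV*. -/
theorem stmt12 {n₁ n₂ r : ℕ} (hr : 0 < r)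
    (Ustar : Matrix (Fin n₁) (Fin r) ℝ) (Vstar : Matrix (Fin n₂) (Fin r) ℝ)
    (σs : Fin r → ℝ) (E : Matrix (Fin n₁) (Fin n₂) ℝ)
    (Ut : Matrix (Fin n₁) (Fin r) ℝ) (Wt : Matrix (Fin r) (Fin r) ℝ) (σt : Fin r → ℝ)
    (sr : ℝ)
    (hUstar : Ustarᵀ * Ustar = 1) (hVstar : Vstarᵀ * Vstar = 1)
    (hσs : ∀ i, 0 < σs i)
    (hUt : Utᵀ * Ut = 1) (hWt : Wtᵀ * Wt = 1)
    (hσt : ∀ i, 0 < σt i)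
    (hsr : sr = ⨅ i, σt i) (hsrpos : 0 < sr)
    (hSVD : Ut * Matrix.diagonal σt * Wtᵀ = Ustar * Matrix.diagonal σs + E * Vstar) :
    rowNorm (Ustar * Ustarᵀ * Ut - Ut)
      ≤ (rowNorm (E * Vstar) + rowNorm Ustar * spec (Ustarᵀ * (E * Vstar))) / sr := by
  set X : Matrix (Fin n₁) (Fin r) ℝ := Ustar * Ustarᵀ * Ut - Ut with hXdef
  set Y : Matrix (Fin n₁) (Fin r) ℝ :=
    Ustar * (Ustarᵀ * (E * Vstar)) - E * Vstar with hYdef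
  have hPU : Ustar * Ustarᵀ * Ustar = Ustar := by
    rw [Matrix.mul_assoc, hUstar, Matrix.mul_one]
  have key : X * (Matrix.diagonal σt * Wtᵀ) = Y := by
    rw [hXdef, Matrix.sub_mul]
    have e1 : Ustar * Ustarᵀ * Ut * (Matrix.diagonal σt * Wtᵀ)
        = Ustar * Ustarᵀ * (Ut * Matrix.diagonal σt * Wtᵀ) := by
      simp only [Matrix.mul_assoc]
    have e2 : Ut * (Matrix.diagonal σt * Wtᵀ) = Ut * Matrix.diagonal σt * Wtᵀ := by
      simp only [Matrix.mul_assoc]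
    rw [e1, e2, hSVD, Matrix.mul_add]
    have e3 : Ustar * Ustarᵀ * (Ustar * Matrix.diagonal σs) = Ustar * Matrix.diagonal σs := by
      rw [← Matrix.mul_assoc, hPU]
    have e4 : Ustar * Ustarᵀ * (E * Vstar) = Ustar * (Ustarᵀ * (E * Vstar)) := by
      simp only [Matrix.mul_assoc]
    rw [e3, e4, hYdef]
    abel
  have hinv : Matrix.diagonal σt * Matrix.diagonal (fun i => (σt i)⁻¹) = 1 := by
    rw [Matrix.diagonal_mul_diagonal]
    have : (fun i => σt i * (σt i)⁻¹) = fun _ : Fin r => (1 : ℝ) := by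
      funext i; exact mul_inv_cancel₀ (hσt i).ne'
    rw [this, Matrix.diagonal_one]
  have hX : Y * Wt * Matrix.diagonal (fun i => (σt i)⁻¹) = X := by
    rw [← key]
    calc X * (Matrix.diagonal σt * Wtᵀ) * Wt * Matrix.diagonal (fun i => (σt i)⁻¹)
        = X * (Matrix.diagonal σt * (Wtᵀ * Wt) * Matrix.diagonal (fun i => (σt i)⁻¹)) := by
          simp only [Matrix.mul_assoc]
      _ = X := by rw [hWt, Matrix.mul_one, hinv, Matrix.mul_one]
  have hsrinv : (0 : ℝ) ≤ sr⁻¹ := le_of_lt (inv_pos.mpr hsrpos)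
  have hd : ∀ j, |(σt j)⁻¹| ≤ sr⁻¹ := by
    intro j
    rw [abs_of_pos (inv_pos.mpr (hσt j))]
    have hle : sr ≤ σt j := by
      rw [hsr]
      exact ciInf_le (Set.Finite.bddBelow (Set.finite_range _)) j
    exact inv_anti₀ hsrpos hle
  have hWWt : Wt * Wtᵀ = 1 := mul_eq_one_comm.mp hWt
  have step1 : rowNorm X ≤ sr⁻¹ * rowNorm Y := by
    rw [← hX]
    exact rowNorm_mul_orth_diag Y Wt hWWt _ sr⁻¹ hsrinv hd
  have step2 : rowNorm Y
      ≤ rowNorm (E * Vstar) + rowNorm Ustar * spec (Ustarᵀ * (E * Vstar)) := by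
    rw [hYdef]
    refine (rowNorm_sub_le _ _).trans ?_
    rw [add_comm]
    exact add_le_add_right (rowNorm_mul_le Ustar (Ustarᵀ * (E * Vstar))) _
  calc rowNorm X ≤ sr⁻¹ * rowNorm Y := step1
    _ ≤ sr⁻¹ * (rowNorm (E * Vstar) + rowNorm Ustar * spec (Ustarᵀ * (E * Vstar))) :=
        mul_le_mul_of_nonneg_left step2 hsrinv
    _ = (rowNorm (E * Vstar) + rowNorm Ustar * spec (Ustarᵀ * (E * Vstar))) / sr := by
        rw [div_eq_inv_mul]
end
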